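/- Let P be a strongly confluent infinite downward bounded binomial poset with atomic sequence (1,1,2,2,2,...). Then for every i ≥ 1, the section X_{i+1,i+2} = X_{i+1} ∪ X_{i+2} with the induced cover relations is a bipartite 2-regular graph on 8 vertices, hence isomorphic to C_8 or to C_4 ∪ C_4. -/

import Mathlib

open Relation Filter Topology

/-- The set of saturated chains from `x` to `y`: lists whose consecutive entries are
cover relations, starting at `x` and ending at `y`.  A chain of `n + 1` elements
corresponds to an interval of length `n`. -/
def CovChains {P : Type*} [PartialOrder P] (x y : P) : Set (List P) :=
  {l | l.Chain' (· ⋖ ·) ∧ l.head? = some x ∧ l.getLast? = some y}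

/-- `x` has rank `n` over the bottom element `b` : some saturated chain from `b` to `x`
has `n + 1` elements. -/
def HasRankFrom {P : Type*} [PartialOrder P] (b x : P) (n : ℕ) : Prop :=
  ∃ l ∈ CovChains b x, l.length = n + 1

/-- The rank level `X_i`. -/
def levelSet {P : Type*} [PartialOrder P] (b : P) (i : ℕ) : Set P :=
  {x | HasRankFrom b x i}

/-- A poset is strongly confluent if it is the union of the intervals `[⊥, x i]` along
an infinite (strictly increasing) chain `x 1 < x 2 < ...`. -/
def StronglyConfluent (P : Type*) [Preorder P] : Prop :=
  ∃ x : ℕ → P, StrictMono x ∧ ∀ p : P, ∃ i, p ≤ x i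

/-- An (infinite, downward bounded, directed, locally finite) binomial poset with bottom
element `b` and atomic function `A` : graded, with intervals of every length, where the
number of maximal chains in an interval only depends on its length, and every `n`-interval
(`n ≥ 1`) has exactly `A n` atoms. -/
structure IsBinomialPoset (P : Type*) [PartialOrder P] (b : P) (A : ℕ → ℕ) : Prop where
  bot_le : ∀ x : P, b ≤ x
  directed : ∀ x y : P, ∃ z : P, x ≤ z ∧ y ≤ z
  locFin : ∀ x y : P, (Set.Icc x y).Finite
  chain_nonempty : ∀ x y : P, x ≤ y → (CovChains x y).Nonempty
  graded : ∀ x y : P, ∀ l ∈ CovChains x y, ∀ l' ∈ CovChains x y, l.length = l'.length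
  allLengths : ∀ n : ℕ, ∃ x : P, HasRankFrom b x n
  count : ∀ (x y x' y' : P) (n : ℕ), (∃ l ∈ CovChains x y, l.length = n + 1) →
    (∃ l ∈ CovChains x' y', l.length = n + 1) →
    (CovChains x y).ncard = (CovChains x' y').ncard
  atoms : ∀ (x y : P) (n : ℕ), 1 ≤ n → (∃ l ∈ CovChains x y, l.length = n + 1) →
    {z : P | x ⋖ z ∧ z ≤ y}.ncard = A n

/-- The generalised factorial function `B n = A 1 * A 2 * ... * A n`. -/
def Bfun (A : ℕ → ℕ) (n : ℕ) : ℕ := ∏ i ∈ Finset.Icc 1 n, A i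

/-- A bundled poset with a distinguished bottom element. -/
structure BinPoset where
  carrier : Type
  [po : PartialOrder carrier]
  bot : carrier

attribute [instance] BinPoset.po

/-- The atomic sequence `(1, 1, 2, 2, 2, ...)`. -/
def A112 : ℕ → ℕ := fun n => if n ≤ 2 then 1 else 2
/-- The disjoint union of two simple graphs. -/
def SimpleGraph.disjUnion {α β : Type*} (G : SimpleGraph α) (H : SimpleGraph β) :
    SimpleGraph (α ⊕ β) where
  Adj x y := match x, y with
    | Sum.inl a, Sum.inl b => G.Adj a b
    | Sum.inr a, Sum.inr b => H.Adj a b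
    | _, _ => False
  symm := ⟨by
    rintro (a | a) (b | b) h
    · exact G.symm.symm _ _ h
    · exact h.elim
    · exact h.elim
    · exact H.symm.symm _ _ h⟩
  loopless := ⟨by
    rintro (a | a) h
    · exact G.loopless.irrefl a h
    · exact H.loopless.irrefl a h⟩
/-- The vertex set of the section `X_{i+1, i+2}`. -/
def SectionVerts {P : Type*} [PartialOrder P] (b : P) (i : ℕ) : Set P :=
  levelSet b (i + 1) ∪ levelSet b (i + 2)

/-- The Hasse graph of the section `X_{i+1, i+2}` : vertices are the elements of ranks
`i+1` and `i+2`, edges are the cover relations. -/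
def sectionGraph {P : Type*} [PartialOrder P] (b : P) (i : ℕ) :
    SimpleGraph (SectionVerts b i) where
  Adj x y := (x : P) ⋖ (y : P) ∨ (y : P) ⋖ (x : P)
  symm := ⟨by intro x y h; tauto⟩
  loopless := ⟨by
    intro x h
    rcases h with h | h <;> exact absurd h.lt (lt_irrefl _)⟩

/-- The invariant `φ(P)_i = 3 - (number of connected components of `X_{i+1,i+2}`)`. -/
noncomputable def phiInv {P : Type*} [PartialOrder P] (b : P) (i : ℕ) : ℕ :=
  3 - Nat.card (sectionGraph b i).ConnectedComponent
section ChainBasics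

variable {P : Type*} [PartialOrder P]

lemma covChains_ne_nil {x y : P} {l : List P} (h : l ∈ CovChains x y) : l ≠ [] := by
  rintro rfl; simp [CovChains] at h

lemma covChains_singleton (x : P) : [x] ∈ CovChains x x := by
  refine ⟨List.isChain_singleton x, rfl, rfl⟩

lemma covChains_length_pos {x y : P} {l : List P} (h : l ∈ CovChains x y) : 1 ≤ l.length :=
  List.length_pos_iff.mpr (covChains_ne_nil h)

lemma covChains_singleton_iff {x y a : P} (h : [a] ∈ CovChains x y) : a = x ∧ a = y := by
  obtain ⟨-, h1, h2⟩ := h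
  simp only [List.head?_cons, List.getLast?_singleton, Option.some.injEq] at h1 h2
  exact ⟨h1, h2⟩

lemma mem_covChains_cons {x z y : P} {l : List P} (hxz : x ⋖ z) (hl : l ∈ CovChains z y) :
    (x :: l) ∈ CovChains x y := by
  obtain ⟨hc, hh, hg⟩ := hl
  cases l with
  | nil => simp at hh
  | cons a t =>
    simp only [List.head?_cons, Option.some.injEq] at hh
    subst hh
    exact ⟨List.isChain_cons_cons.mpr ⟨hxz, hc⟩, rfl, by simpa using hg⟩

lemma covChains_cons_decomp {x y : P} {l : List P} (h : l ∈ CovChains x y)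
    (hlen : 2 ≤ l.length) :
    ∃ z l', x ⋖ z ∧ l' ∈ CovChains z y ∧ l = x :: l' := by
  obtain ⟨hc, hh, hg⟩ := h
  match l, hlen with
  | a :: b :: t, _ =>
    simp only [List.head?_cons, Option.some.injEq] at hh
    subst hh
    unfold List.Chain' at hc; rw [List.isChain_cons_cons] at hc
    exact ⟨b, b :: t, hc.1, ⟨hc.2, rfl, by simpa using hg⟩, rfl⟩

lemma covChains_le {x y : P} {l : List P} (h : l ∈ CovChains x y) : x ≤ y := by
  induction l generalizing x with
  | nil => exact absurd rfl (covChains_ne_nil h)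
  | cons a t ih =>
    obtain ⟨hc, hh, hg⟩ := h
    simp only [List.head?_cons, Option.some.injEq] at hh
    subst hh
    cases t with
    | nil =>
      simp only [List.getLast?_singleton, Option.some.injEq] at hg
      exact hg ▸ le_refl _
    | cons c t' =>
      unfold List.Chain' at hc; rw [List.isChain_cons_cons] at hc
      exact le_trans hc.1.le (ih ⟨hc.2, rfl, by simpa using hg⟩)

lemma mem_covChains_concat {x u y : P} {l : List P} (huy : u ⋖ y) (hl : l ∈ CovChains x u) :
    (l ++ [y]) ∈ CovChains x y := by
  obtain ⟨hc, hh, hg⟩ := hl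
  refine ⟨?_, ?_, by simp⟩
  · refine List.IsChain.append hc (List.isChain_singleton y) ?_
    intro a ha c hcmem
    simp only [List.head?_cons, Option.mem_def, Option.some.injEq] at hcmem
    subst hcmem
    rw [Option.mem_def, hg] at ha
    cases ha
    exact huy
  · rw [List.head?_append_of_ne_nil _ (covChains_ne_nil ⟨hc, hh, hg⟩)]
    exact hh

lemma covChains_concat_decomp {x y : P} {l : List P} (h : l ∈ CovChains x y)
    (hlen : 2 ≤ l.length) :
    ∃ u l', u ⋖ y ∧ l' ∈ CovChains x u ∧ l = l' ++ [y] := by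
  obtain ⟨hc, hh, hg⟩ := h
  have hne : l ≠ [] := covChains_ne_nil ⟨hc, hh, hg⟩
  have hdrop : l.dropLast ++ [l.getLast hne] = l := List.dropLast_append_getLast hne
  have hy : l.getLast hne = y := by
    have := List.getLast?_eq_getLast hne
    rw [hg] at this; exact (Option.some.injEq _ _).mp this.symm
  have hdne : l.dropLast ≠ [] := by
    intro h0
    have := congrArg List.length hdrop
    simp [h0] at this
    omega
  have hc' : List.Chain' (· ⋖ ·) (l.dropLast ++ [l.getLast hne]) := by rw [hdrop]; exact hc
  unfold List.Chain' at hc'; rw [List.isChain_append] at hc'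
  obtain ⟨hc1, -, hrel⟩ := hc'
  set u := l.dropLast.getLast hdne with hu
  refine ⟨u, l.dropLast, ?_, ⟨hc1, ?_, List.getLast?_eq_getLast hdne⟩, by rw [hy] at hdrop; exact hdrop.symm⟩
  · have := hrel u (by rw [Option.mem_def]; exact List.getLast?_eq_getLast hdne)
      (l.getLast hne) (by simp)
    rwa [hy] at this
  · rw [← List.head?_append_of_ne_nil l.dropLast (l₂ := [l.getLast hne]) hdne, hdrop]
    exact hh

lemma covChains_append {x z : P} {m : List P} : ∀ {y : P} {l : List P},
    l ∈ CovChains x y → m ∈ CovChains y z →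
    (l ++ m.tail) ∈ CovChains x z ∧ (l ++ m.tail).length + 1 = l.length + m.length := by
  induction m with
  | nil => intro y l _ hm; exact absurd rfl (covChains_ne_nil hm)
  | cons a t ih =>
    intro y l hl hm
    obtain ⟨hc, hh, hg⟩ := hm
    simp only [List.head?_cons, Option.some.injEq] at hh
    subst hh
    cases t with
    | nil =>
      obtain ⟨hy, hz⟩ := covChains_singleton_iff ⟨hc, rfl, hg⟩
      subst hz
      simp only [List.tail_cons, List.append_nil]
      exact ⟨hl, by simp⟩
    | cons c t' =>
      unfold List.Chain' at hc; rw [List.isChain_cons_cons] at hc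
      have htail : (c :: t') ∈ CovChains c z := ⟨hc.2, rfl, by simpa using hg⟩
      have h2 : (l ++ [c]) ∈ CovChains x c := mem_covChains_concat hc.1 hl
      have hmain := ih h2 htail
      simp only [List.tail_cons] at hmain ⊢
      rw [List.append_assoc] at hmain
      simp only [List.singleton_append] at hmain
      refine ⟨hmain.1, ?_⟩
      have := hmain.2
      simp only [List.length_append, List.length_cons] at this ⊢
      omega

end ChainBasics
section Ranks

variable {P : Type*} [PartialOrder P] {b : P}

lemma covby_mem_covChains {x y : P} (h : x ⋖ y) : [x, y] ∈ CovChains x y :=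
  ⟨List.isChain_pair.mpr h, rfl, rfl⟩

lemma rank_exists (hP : IsBinomialPoset P b A112) (x : P) : ∃ n, HasRankFrom b x n := by
  obtain ⟨l, hl⟩ := hP.chain_nonempty b x (hP.bot_le x)
  obtain ⟨k, hk⟩ := Nat.exists_eq_add_of_le (covChains_length_pos hl)
  exact ⟨k, l, hl, by omega⟩

lemma rank_unique (hP : IsBinomialPoset P b A112) {x : P} {m n : ℕ}
    (hm : HasRankFrom b x m) (hn : HasRankFrom b x n) : m = n := by
  obtain ⟨l, hl, hlen⟩ := hm
  obtain ⟨l', hl', hlen'⟩ := hn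
  have := hP.graded b x l hl l' hl'
  omega

lemma rank_add (hP : IsBinomialPoset P b A112) {x y : P} {m k : ℕ}
    (hx : HasRankFrom b x m) (h : ∃ l ∈ CovChains x y, l.length = k + 1) :
    HasRankFrom b y (m + k) := by
  obtain ⟨l, hl, hlen⟩ := hx
  obtain ⟨l', hl', hlen'⟩ := h
  obtain ⟨hmem, hlen''⟩ := covChains_append hl hl'
  exact ⟨l ++ l'.tail, hmem, by omega⟩

lemma rank_covby (hP : IsBinomialPoset P b A112) {x y : P} {m : ℕ}
    (h : x ⋖ y) (hx : HasRankFrom b x m) : HasRankFrom b y (m + 1) :=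
  rank_add hP hx ⟨[x, y], covby_mem_covChains h, rfl⟩

/-- If `x ≤ y` with ranks `m`, `n`, then `m ≤ n` and there is a chain of length `n - m`. -/
lemma chain_of_ranks (hP : IsBinomialPoset P b A112) {x y : P} {m n : ℕ}
    (hxy : x ≤ y) (hx : HasRankFrom b x m) (hy : HasRankFrom b y n) :
    m ≤ n ∧ ∃ l ∈ CovChains x y, l.length = (n - m) + 1 := by
  obtain ⟨l, hl⟩ := hP.chain_nonempty x y hxy
  obtain ⟨k, hk⟩ := Nat.exists_eq_add_of_le (covChains_length_pos hl)
  have h1 : HasRankFrom b y (m + k) := rank_add hP hx ⟨l, hl, by omega⟩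
  have h2 : m + k = n := rank_unique hP h1 hy
  exact ⟨by omega, l, hl, by omega⟩

lemma rank_lt_of_lt (hP : IsBinomialPoset P b A112) {x y : P} {m n : ℕ}
    (hxy : x < y) (hx : HasRankFrom b x m) (hy : HasRankFrom b y n) : m < n := by
  obtain ⟨hmn, l, hl, hlen⟩ := chain_of_ranks hP hxy.le hx hy
  rcases Nat.lt_or_ge m n with h | h
  · exact h
  · have : n - m = 0 := by omega
    rw [this] at hlen
    have := covChains_ne_nil hl
    match l, hlen with
    | [a], _ =>
      obtain ⟨h1, h2⟩ := covChains_singleton_iff hl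
      exact absurd (h1 ▸ h2 : x = y) hxy.ne

lemma rank_covby_eq (hP : IsBinomialPoset P b A112) {x y : P} {m n : ℕ}
    (h : x ⋖ y) (hx : HasRankFrom b x m) (hy : HasRankFrom b y n) : n = m + 1 :=
  (rank_unique hP hy (rank_covby hP h hx)).symm ▸ rfl

lemma rankFrom_bot (hP : IsBinomialPoset P b A112) : HasRankFrom b b 0 :=
  ⟨[b], covChains_singleton b, rfl⟩

lemma levelSet_zero (hP : IsBinomialPoset P b A112) : levelSet b 0 = {b} := by
  ext x
  simp only [levelSet, Set.mem_setOf_eq, Set.mem_singleton_iff]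
  constructor
  · rintro ⟨l, hl, hlen⟩
    match l, hlen with
    | [a], _ =>
      obtain ⟨h1, h2⟩ := covChains_singleton_iff hl
      exact (h2.symm.trans h1)
  · rintro rfl
    exact rankFrom_bot hP

lemma levelSet_one (hP : IsBinomialPoset P b A112) : levelSet b 1 = {z | b ⋖ z} := by
  ext x
  simp only [levelSet, Set.mem_setOf_eq]
  constructor
  · rintro ⟨l, hl, hlen⟩
    obtain ⟨z, l', hz, hl', heq⟩ := covChains_cons_decomp hl (by omega)
    subst heq
    simp only [List.length_cons] at hlen
    match l', hlen with
    | [a], _ =>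
      obtain ⟨h1, h2⟩ := covChains_singleton_iff hl'
      exact (h1.symm.trans h2) ▸ hz
  · intro h
    exact ⟨[b, x], covby_mem_covChains h, rfl⟩

lemma levelSet_disjoint (hP : IsBinomialPoset P b A112) {m n : ℕ} (h : m ≠ n) :
    Disjoint (levelSet b m) (levelSet b n) := by
  rw [Set.disjoint_left]
  intro x hm hn
  exact h (rank_unique hP hm hn)

end Ranks
section Counts

variable {P : Type*} [PartialOrder P] {b : P}

lemma atomSet_finite (hP : IsBinomialPoset P b A112) (x y : P) :
    {z : P | x ⋖ z ∧ z ≤ y}.Finite :=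
  (hP.locFin x y).subset (fun z hz => ⟨hz.1.le, hz.2⟩)

lemma coatomSet_finite (hP : IsBinomialPoset P b A112) (x y : P) :
    {u : P | x ≤ u ∧ u ⋖ y}.Finite :=
  (hP.locFin x y).subset (fun u hu => ⟨hu.1, hu.2.le⟩)

lemma covChains_self (hP : IsBinomialPoset P b A112) {x y : P}
    (h : ∃ l ∈ CovChains x y, l.length = 1) : x = y ∧ CovChains x y = {[x]} := by
  obtain ⟨l, hl, hlen⟩ := h
  match l, hlen with
  | [a], _ =>
    obtain ⟨h1, h2⟩ := covChains_singleton_iff hl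
    subst h1
    have hxy : a = y := h2
    subst hxy
    refine ⟨rfl, ?_⟩
    ext l'
    simp only [Set.mem_singleton_iff]
    constructor
    · intro hl'
      have := hP.graded a a _ hl _ hl'
      match l', this with
      | [c], _ => rw [(covChains_singleton_iff hl').1]
    · rintro rfl; exact hl

lemma chain_through_atom (hP : IsBinomialPoset P b A112) {x y z : P} {n : ℕ}
    (h : ∃ l ∈ CovChains x y, l.length = n + 2) (hz : x ⋖ z) (hzy : z ≤ y) :
    ∃ m ∈ CovChains z y, m.length = n + 1 := by
  obtain ⟨l, hl, hlen⟩ := h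
  obtain ⟨m, hm⟩ := hP.chain_nonempty z y hzy
  have hmem := mem_covChains_cons hz hm
  have := hP.graded x y _ hl _ hmem
  simp only [List.length_cons] at this
  exact ⟨m, hm, by omega⟩

lemma chain_through_coatom (hP : IsBinomialPoset P b A112) {x y u : P} {n : ℕ}
    (h : ∃ l ∈ CovChains x y, l.length = n + 2) (hu : u ⋖ y) (hxu : x ≤ u) :
    ∃ m ∈ CovChains x u, m.length = n + 1 := by
  obtain ⟨l, hl, hlen⟩ := h
  obtain ⟨m, hm⟩ := hP.chain_nonempty x u hxu
  have hmem := mem_covChains_concat hu hm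
  have := hP.graded x y _ hl _ hmem
  simp only [List.length_append, List.length_cons, List.length_nil] at this
  exact ⟨m, hm, by omega⟩

lemma covChains_eq_biUnion (hP : IsBinomialPoset P b A112) {x y : P} {n : ℕ}
    (h : ∃ l ∈ CovChains x y, l.length = n + 2) :
    CovChains x y = ⋃ z ∈ {z : P | x ⋖ z ∧ z ≤ y}, (x :: ·) '' CovChains z y := by
  obtain ⟨l, hl, hlen⟩ := h
  ext l'
  simp only [Set.mem_iUnion, Set.mem_image, Set.mem_setOf_eq, exists_prop]
  constructor
  · intro hl'
    have hlen' : l'.length = n + 2 := (hP.graded x y _ hl' _ hl).trans hlen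
    obtain ⟨z, l'', hz, hl'', heq⟩ := covChains_cons_decomp hl' (by omega)
    exact ⟨z, ⟨hz, covChains_le hl''⟩, l'', hl'', heq.symm⟩
  · rintro ⟨z, ⟨hz, -⟩, l'', hl'', rfl⟩
    exact mem_covChains_cons hz hl''

lemma covChains_eq_biUnion' (hP : IsBinomialPoset P b A112) {x y : P} {n : ℕ}
    (h : ∃ l ∈ CovChains x y, l.length = n + 2) :
    CovChains x y = ⋃ u ∈ {u : P | x ≤ u ∧ u ⋖ y}, (· ++ [y]) '' CovChains x u := by
  obtain ⟨l, hl, hlen⟩ := h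
  ext l'
  simp only [Set.mem_iUnion, Set.mem_image, Set.mem_setOf_eq, exists_prop]
  constructor
  · intro hl'
    have hlen' : l'.length = n + 2 := (hP.graded x y _ hl' _ hl).trans hlen
    obtain ⟨u, l'', hu, hl'', heq⟩ := covChains_concat_decomp hl' (by omega)
    exact ⟨u, ⟨covChains_le hl'', hu⟩, l'', hl'', heq.symm⟩
  · rintro ⟨u, ⟨-, hu⟩, l'', hl'', rfl⟩
    exact mem_covChains_concat hu hl''

lemma covChains_finite (hP : IsBinomialPoset P b A112) :
    ∀ (n : ℕ) (x y : P), (∃ l ∈ CovChains x y, l.length = n + 1) → (CovChains x y).Finite := by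
  intro n
  induction n with
  | zero =>
    intro x y h
    rw [(covChains_self hP h).2]
    exact Set.finite_singleton _
  | succ n ih =>
    intro x y h
    rw [covChains_eq_biUnion hP h]
    refine Set.Finite.biUnion (atomSet_finite hP x y) (fun z hz => ?_)
    exact (ih z y (chain_through_atom hP h hz.1 hz.2)).image _

/-- A generic counting lemma: a finite disjoint union of sets of constant size `c`. -/
lemma ncard_biUnion_const {α β : Type*} {S : Set α} (hS : S.Finite) (f : α → Set β)
    (hf : ∀ z ∈ S, (f z).Finite)
    (hdisj : ∀ z ∈ S, ∀ z' ∈ S, z ≠ z' → Disjoint (f z) (f z')) (c : ℕ)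
    (hc : ∀ z ∈ S, (f z).ncard = c) :
    (⋃ z ∈ S, f z).ncard = S.ncard * c := by
  classical
  let S' : Finset α := hS.toFinset
  have hmemS' : ∀ z, z ∈ S' ↔ z ∈ S := fun z => hS.mem_toFinset
  let g : α → Finset β := fun z => if h : z ∈ S then (hf z h).toFinset else ∅
  have hg : ∀ z ∈ S, ↑(g z) = f z := by
    intro z hz
    simp only [g, dif_pos hz, Set.Finite.coe_toFinset]
  have hUnion : (⋃ z ∈ S, f z) = ↑(S'.biUnion g) := by
    ext w
    simp only [Set.mem_iUnion, Finset.coe_biUnion, Set.mem_iUnion, Finset.mem_coe, exists_prop]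
    constructor
    · rintro ⟨z, hz, hw⟩
      exact ⟨z, (hmemS' z).mpr hz, by rw [← Finset.mem_coe, hg z hz]; exact hw⟩
    · rintro ⟨z, hz, hw⟩
      have hz' := (hmemS' z).mp hz
      exact ⟨z, hz', by rw [← hg z hz', Finset.mem_coe]; exact hw⟩
  rw [hUnion, Set.ncard_coe_finset]
  rw [Finset.card_biUnion]
  · have : ∀ z ∈ S', (g z).card = c := by
      intro z hz
      have hz' := (hmemS' z).mp hz
      rw [← Set.ncard_coe_finset, hg z hz']
      exact hc z hz'
    rw [Finset.sum_congr rfl this, Finset.sum_const, smul_eq_mul]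
    congr 1
    rw [← Set.ncard_coe_finset, hS.coe_toFinset]
  · intro z hz z' hz' hne
    have h1 := hdisj z ((hmemS' z).mp hz) z' ((hmemS' z').mp hz') hne
    show Disjoint (g z) (g z')
    rw [Finset.disjoint_left]
    intro w hw hw'
    rw [← Finset.mem_coe, hg z ((hmemS' z).mp hz)] at hw
    rw [← Finset.mem_coe, hg z' ((hmemS' z').mp hz')] at hw'
    exact Set.disjoint_left.mp h1 hw hw'

/-- The number of maximal chains of an `n`-interval. -/
noncomputable def Cfun (hP : IsBinomialPoset P b A112) (n : ℕ) : ℕ :=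
  (CovChains b (hP.allLengths n).choose).ncard

lemma covChains_ncard_eq_Cfun (hP : IsBinomialPoset P b A112) {x y : P} {n : ℕ}
    (h : ∃ l ∈ CovChains x y, l.length = n + 1) :
    (CovChains x y).ncard = Cfun hP n :=
  hP.count x y b (hP.allLengths n).choose n h (hP.allLengths n).choose_spec

lemma Cfun_pos (hP : IsBinomialPoset P b A112) (n : ℕ) : 0 < Cfun hP n := by
  have hspec := (hP.allLengths n).choose_spec
  rw [Cfun, Set.ncard_pos (covChains_finite hP n _ _ hspec)]
  exact hP.chain_nonempty _ _ (hP.bot_le _)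

lemma Cfun_rec_atoms (hP : IsBinomialPoset P b A112) {x y : P} {n : ℕ}
    (h : ∃ l ∈ CovChains x y, l.length = n + 2) :
    Cfun hP (n + 1) = {z : P | x ⋖ z ∧ z ≤ y}.ncard * Cfun hP n := by
  rw [← covChains_ncard_eq_Cfun hP (n := n + 1) (by simpa using h)]
  rw [covChains_eq_biUnion hP h]
  refine ncard_biUnion_const (atomSet_finite hP x y) _ ?_ ?_ _ ?_
  · intro z hz
    exact ((covChains_finite hP n z y (chain_through_atom hP h hz.1 hz.2)).image _)
  · intro z hz z' hz' hne
    rw [Set.disjoint_left]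
    rintro l0 ⟨l1, hl1, rfl⟩ ⟨l2, hl2, heq⟩
    have : l1 = l2 := List.cons_injective heq.symm
    subst this
    apply hne
    have e1 := hl1.2.1
    have e2 := hl2.2.1
    rw [e1] at e2
    injection e2
  · intro z hz
    rw [Set.ncard_image_of_injective _ List.cons_injective]
    exact covChains_ncard_eq_Cfun hP (chain_through_atom hP h hz.1 hz.2)

lemma Cfun_rec_coatoms (hP : IsBinomialPoset P b A112) {x y : P} {n : ℕ}
    (h : ∃ l ∈ CovChains x y, l.length = n + 2) :
    Cfun hP (n + 1) = {u : P | x ≤ u ∧ u ⋖ y}.ncard * Cfun hP n := by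
  rw [← covChains_ncard_eq_Cfun hP (n := n + 1) (by simpa using h)]
  rw [covChains_eq_biUnion' hP h]
  refine ncard_biUnion_const (coatomSet_finite hP x y) _ ?_ ?_ _ ?_
  · intro u hu
    exact ((covChains_finite hP n x u (chain_through_coatom hP h hu.2 hu.1)).image _)
  · intro u hu u' hu' hne
    rw [Set.disjoint_left]
    rintro l0 ⟨l1, hl1, rfl⟩ ⟨l2, hl2, heq⟩
    have : l1 = l2 := List.append_left_injective [y] heq.symm
    subst this
    apply hne
    have e1 := hl1.2.2
    have e2 := hl2.2.2
    rw [e1] at e2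
    exact (by injection e2 : u = u')
  · intro u hu
    rw [Set.ncard_image_of_injective _ (List.append_left_injective [y])]
    exact covChains_ncard_eq_Cfun hP (chain_through_coatom hP h hu.2 hu.1)

/-- Down-degree: an element of rank `n + 1` covers exactly `A112 (n + 1)` elements. -/
lemma downdeg (hP : IsBinomialPoset P b A112) {w : P} {n : ℕ}
    (hw : HasRankFrom b w (n + 1)) : {u : P | u ⋖ w}.ncard = A112 (n + 1) := by
  have hchain : ∃ l ∈ CovChains b w, l.length = n + 2 := by
    obtain ⟨l, hl, hlen⟩ := hw
    exact ⟨l, hl, by omega⟩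
  have h1 := Cfun_rec_atoms hP hchain
  have h2 := Cfun_rec_coatoms hP hchain
  have h3 : {z : P | b ⋖ z ∧ z ≤ w}.ncard = A112 (n + 1) :=
    hP.atoms b w (n + 1) (by omega) (by simpa using hchain)
  have h4 : {u : P | b ≤ u ∧ u ⋖ w} = {u : P | u ⋖ w} := by
    ext u; simp [hP.bot_le u]
  rw [h3] at h1
  rw [h4] at h2
  have := Cfun_pos hP n
  have := h1.symm.trans h2
  exact (Nat.eq_of_mul_eq_mul_right (Cfun_pos hP n) this).symm

end Counts
section Levels

variable {P : Type*} [PartialOrder P] {b : P}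

lemma A112_one : A112 1 = 1 := rfl
lemma A112_two : A112 2 = 1 := rfl
lemma A112_ge (k : ℕ) (hk : 3 ≤ k) : A112 k = 2 := by
  simp only [A112, if_neg (by omega : ¬ k ≤ 2)]

lemma rank_le_of_le (hP : IsBinomialPoset P b A112) {x y : P} {m n : ℕ}
    (hxy : x ≤ y) (hx : HasRankFrom b x m) (hy : HasRankFrom b y n) : m ≤ n :=
  (chain_of_ranks hP hxy hx hy).1

/-- Every element has exactly two upper covers (needs strong confluence). -/
lemma updeg (hP : IsBinomialPoset P b A112) (hconf : StronglyConfluent P) (v : P) :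
    {z : P | v ⋖ z}.Finite ∧ {z : P | v ⋖ z}.ncard = 2 := by
  obtain ⟨c, hmono, hcof⟩ := hconf
  obtain ⟨m, hm⟩ := rank_exists hP v
  have hrankc : ∀ j, ∃ M, HasRankFrom b (c j) M := fun j => rank_exists hP (c j)
  -- the atoms of `[v, c j]` when the interval is long enough
  have key : ∀ j, v ≤ c j → ∀ M, HasRankFrom b (c j) M → m + 3 ≤ M →
      {z : P | v ⋖ z ∧ z ≤ c j}.ncard = 2 := by
    intro j hvj M hMrank hM
    obtain ⟨hmM, l, hl, hlen⟩ := chain_of_ranks hP hvj hm hMrank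
    have h2 := hP.atoms v (c j) (M - m) (by omega) ⟨l, hl, hlen⟩
    rw [h2, A112_ge _ (by omega)]
  -- find a long enough interval
  obtain ⟨j0, hj0⟩ := hcof v
  -- rank grows along the chain
  have hgrow : ∀ j k, ∀ M M', HasRankFrom b (c j) M → HasRankFrom b (c (j + k)) M' →
      M + k ≤ M' := by
    intro j k
    induction k with
    | zero =>
      intro M M' h1 h2
      have := rank_unique hP h1 h2
      omega
    | succ k ih =>
      intro M M' h1 h2
      obtain ⟨M'', hM''⟩ := hrankc (j + k)
      have hlt : M'' < M' := rank_lt_of_lt hP (hmono (by omega : j + k < j + (k+1))) hM'' h2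
      have := ih M M'' h1 hM''
      omega
  obtain ⟨M0, hM0⟩ := hrankc j0
  set J := j0 + (m + 3) with hJ
  obtain ⟨M, hMr⟩ := hrankc J
  have hm0 : m ≤ M0 := rank_le_of_le hP hj0 hm hM0
  have hMbig : m + 3 ≤ M := by
    have := hgrow j0 (m + 3) M0 M hM0 hMr
    omega
  have hvJ : v ≤ c J := le_trans hj0 (hmono.monotone (by omega : j0 ≤ J))
  have hSJ : {z : P | v ⋖ z ∧ z ≤ c J}.ncard = 2 := key J hvJ M hMr hMbig
  have hSfin : ∀ j, {z : P | v ⋖ z ∧ z ≤ c j}.Finite := fun j =>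
    (hP.locFin v (c j)).subset (fun z hz => ⟨hz.1.le, hz.2⟩)
  have hEq : {z : P | v ⋖ z} = {z : P | v ⋖ z ∧ z ≤ c J} := by
    ext z
    simp only [Set.mem_setOf_eq]
    refine ⟨fun hz => ⟨hz, ?_⟩, fun hz => hz.1⟩
    obtain ⟨j1, hj1⟩ := hcof z
    set J' := max J j1 with hJ'
    obtain ⟨M', hM'r⟩ := hrankc J'
    have hvJ' : v ≤ c J' := le_trans hvJ (hmono.monotone (le_max_left _ _))
    have hMM' : M ≤ M' := rank_le_of_le hP (hmono.monotone (le_max_left _ _)) hMr hM'r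
    have hSJ' : {z : P | v ⋖ z ∧ z ≤ c J'}.ncard = 2 := key J' hvJ' M' hM'r (by omega)
    have hsub : {z : P | v ⋖ z ∧ z ≤ c J} ⊆ {z : P | v ⋖ z ∧ z ≤ c J'} := by
      intro w hw
      exact ⟨hw.1, le_trans hw.2 (hmono.monotone (le_max_left _ _))⟩
    have heq2 := Set.eq_of_subset_of_ncard_le hsub (by omega) (hSfin J')
    have hzJ' : z ∈ {z : P | v ⋖ z ∧ z ≤ c J'} :=
      ⟨hz, le_trans hj1 (hmono.monotone (le_max_right _ _))⟩
    rw [← heq2] at hzJ'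
    exact hzJ'.2
  rw [hEq]
  exact ⟨hSfin J, hSJ⟩

lemma level_succ_subset (hP : IsBinomialPoset P b A112) (n : ℕ) :
    levelSet b (n + 1) ⊆ ⋃ v ∈ levelSet b n, {z : P | v ⋖ z} := by
  intro w hw
  obtain ⟨l, hl, hlen⟩ := hw
  obtain ⟨u, l', hu, hl', heq⟩ := covChains_concat_decomp hl (by omega)
  have hlen' : l'.length = n + 1 := by
    have := congrArg List.length heq
    simp only [List.length_append, List.length_cons, List.length_nil] at this
    omega
  simp only [Set.mem_iUnion, Set.mem_setOf_eq, exists_prop]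
  exact ⟨u, ⟨l', hl', hlen'⟩, hu⟩

lemma level_finite (hP : IsBinomialPoset P b A112) (hconf : StronglyConfluent P) :
    ∀ n, (levelSet b n).Finite := by
  intro n
  induction n with
  | zero => rw [levelSet_zero hP]; exact Set.finite_singleton b
  | succ n ih =>
    refine Set.Finite.subset (Set.Finite.biUnion ih (fun v _ => (updeg hP hconf v).1))
      (level_succ_subset hP n)

lemma cover_mem_level (hP : IsBinomialPoset P b A112) {v z : P} {n : ℕ}
    (hv : v ∈ levelSet b n) (hz : v ⋖ z) : z ∈ levelSet b (n + 1) :=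
  rank_covby hP hz hv

lemma cover_mem_level' (hP : IsBinomialPoset P b A112) {u w : P} {n : ℕ}
    (hw : w ∈ levelSet b (n + 1)) (hu : u ⋖ w) : u ∈ levelSet b n := by
  obtain ⟨m, hm⟩ := rank_exists hP u
  have := rank_covby_eq hP hu hm hw
  have : m = n := by omega
  exact this ▸ hm

lemma level_double_count (hP : IsBinomialPoset P b A112) (hconf : StronglyConfluent P)
    (n : ℕ) :
    2 * (levelSet b n).ncard = A112 (n + 1) * (levelSet b (n + 1)).ncard := by
  classical
  have hfn := level_finite hP hconf n
  have hfm := level_finite hP hconf (n + 1)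
  set Fn := hfn.toFinset with hFn
  set Fm := hfm.toFinset with hFm
  set E : Finset (P × P) := (Fn ×ˢ Fm).filter (fun p => p.1 ⋖ p.2) with hE
  -- fiber over the first coordinate
  have hcard1 : E.card = ∑ v ∈ Fn, 2 := by
    rw [Finset.card_eq_sum_card_fiberwise (f := Prod.fst) (t := Fn)
      (fun p hp => (Finset.mem_product.mp (Finset.mem_filter.mp hp).1).1)]
    refine Finset.sum_congr rfl (fun v hv => ?_)
    have hvl : v ∈ levelSet b n := hfn.mem_toFinset.mp hv
    have himg : (E.filter (fun p => p.1 = v)).card = (Fm.filter (fun w => v ⋖ w)).card := by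
      refine Finset.card_bij (fun p _ => p.2) ?_ ?_ ?_
      · rintro ⟨p1, p2⟩ hp
        simp only [Finset.mem_filter, Finset.mem_product, hE] at hp
        obtain ⟨⟨⟨-, h2⟩, h3⟩, h4⟩ := hp
        subst h4
        exact Finset.mem_filter.mpr ⟨h2, h3⟩
      · rintro ⟨p1, p2⟩ hp ⟨q1, q2⟩ hq h
        simp only [Finset.mem_filter, hE] at hp hq
        simp only at h
        rw [Prod.ext_iff]
        exact ⟨hp.2.trans hq.2.symm, h⟩
      · intro w hw
        rw [Finset.mem_filter] at hw
        refine ⟨(v, w), ?_, rfl⟩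
        simp only [Finset.mem_filter, Finset.mem_product, hE]
        exact ⟨⟨⟨hv, hw.1⟩, hw.2⟩, trivial⟩
    rw [himg]
    have hset : ↑(Fm.filter (fun w => v ⋖ w)) = {z : P | v ⋖ z} := by
      ext z
      simp only [Finset.coe_filter, Set.mem_setOf_eq, hFm, Set.Finite.mem_toFinset]
      exact ⟨fun h => h.2, fun h => ⟨cover_mem_level hP hvl h, h⟩⟩
    have := (updeg hP hconf v).2
    rw [← hset, Set.ncard_coe_finset] at this
    exact this
  -- fiber over the second coordinate
  have hcard2 : E.card = ∑ w ∈ Fm, A112 (n + 1) := by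
    rw [Finset.card_eq_sum_card_fiberwise (f := Prod.snd) (t := Fm)
      (fun p hp => (Finset.mem_product.mp (Finset.mem_filter.mp hp).1).2)]
    refine Finset.sum_congr rfl (fun w hw => ?_)
    have hwl : w ∈ levelSet b (n + 1) := hfm.mem_toFinset.mp hw
    have himg : (E.filter (fun p => p.2 = w)).card = (Fn.filter (fun u => u ⋖ w)).card := by
      refine Finset.card_bij (fun p _ => p.1) ?_ ?_ ?_
      · rintro ⟨p1, p2⟩ hp
        simp only [Finset.mem_filter, Finset.mem_product, hE] at hp
        obtain ⟨⟨⟨h1, -⟩, h3⟩, h4⟩ := hp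
        subst h4
        exact Finset.mem_filter.mpr ⟨h1, h3⟩
      · rintro ⟨p1, p2⟩ hp ⟨q1, q2⟩ hq h
        simp only [Finset.mem_filter, hE] at hp hq
        simp only at h
        rw [Prod.ext_iff]
        exact ⟨h, hp.2.trans hq.2.symm⟩
      · intro u hu
        rw [Finset.mem_filter] at hu
        refine ⟨(u, w), ?_, rfl⟩
        simp only [Finset.mem_filter, Finset.mem_product, hE]
        exact ⟨⟨⟨hu.1, hw⟩, hu.2⟩, trivial⟩
    rw [himg]
    have hset : ↑(Fn.filter (fun u => u ⋖ w)) = {u : P | u ⋖ w} := by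
      ext u
      simp only [Finset.coe_filter, Set.mem_setOf_eq, hFn, Set.Finite.mem_toFinset]
      exact ⟨fun h => h.2, fun h => ⟨cover_mem_level' hP hwl h, h⟩⟩
    have := downdeg hP hwl
    rw [← hset, Set.ncard_coe_finset] at this
    exact this
  rw [Finset.sum_const, smul_eq_mul, mul_comm] at hcard1
  rw [Finset.sum_const, smul_eq_mul, mul_comm] at hcard2
  rw [Set.ncard_eq_toFinset_card _ hfn, Set.ncard_eq_toFinset_card _ hfm]
  rw [← hcard1, hcard2]

lemma level_card_one (hP : IsBinomialPoset P b A112) (hconf : StronglyConfluent P) :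
    (levelSet b 1).ncard = 2 := by
  rw [levelSet_one hP]
  exact (updeg hP hconf b).2

lemma level_card (hP : IsBinomialPoset P b A112) (hconf : StronglyConfluent P) :
    ∀ n, 2 ≤ n → (levelSet b n).ncard = 4 := by
  have h2 : (levelSet b 2).ncard = 4 := by
    have := level_double_count hP hconf 1
    rw [level_card_one hP hconf] at this
    have hA : A112 (1 + 1) = 1 := rfl
    rw [hA, one_mul] at this
    norm_num at this
    omega
  intro n hn
  induction n with
  | zero => omega
  | succ n ih =>
    rcases Nat.lt_or_ge n 2 with h | h
    · have : n = 1 := by omega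
      subst this
      exact h2
    · have hn4 := ih (by omega)
      have := level_double_count hP hconf n
      rw [hn4, A112_ge (n + 1) (by omega)] at this
      omega

end Levels
section Isos

lemma fin_sub_eq_iff {n : ℕ} [NeZero n] (i j : Fin n) : i - j = 1 ↔ j = i - 1 := by
  constructor
  · intro h; rw [← h, sub_sub_cancel]
  · intro h; rw [h, sub_sub_cancel]

lemma fin_cycle_iff {n : ℕ} [NeZero n] (i j : Fin n) :
    (i - j = 1 ∨ j - i = 1) ↔ (j = i - 1 ∨ j = i + 1) := by
  have h2 : j - i = 1 ↔ j = i + 1 := by rw [sub_eq_iff_eq_add, add_comm]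
  rw [fin_sub_eq_iff, h2]

lemma iso_C8 {V : Type*} [Finite V] (G : SimpleGraph V) (hcard : Nat.card V = 8)
    (f : Fin 8 → V) (hinj : Function.Injective f)
    (hN : ∀ j : Fin 8, G.neighborSet (f j) = {f (j - 1), f (j + 1)}) :
    Nonempty (G ≃g SimpleGraph.cycleGraph 8) := by
  have hbij : Function.Bijective f :=
    (Nat.bijective_iff_injective_and_card f).mpr ⟨hinj, by rw [hcard]; simp⟩
  let e := Equiv.ofBijective f hbij
  have hadj : ∀ i j : Fin 8, G.Adj (f i) (f j) ↔ (SimpleGraph.cycleGraph 8).Adj i j := by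
    intro i j
    have h1 : G.Adj (f i) (f j) ↔ f j ∈ G.neighborSet (f i) := Iff.rfl
    rw [h1, hN i]
    simp only [Set.mem_insert_iff, Set.mem_singleton_iff]
    have hc : (SimpleGraph.cycleGraph 8).Adj i j ↔ i - j = 1 ∨ j - i = 1 :=
      SimpleGraph.cycleGraph_adj (n := 6)
    rw [hc, fin_cycle_iff]
    constructor
    · rintro (h | h)
      · exact Or.inl (hinj h)
      · exact Or.inr (hinj h)
    · rintro (h | h)
      · exact Or.inl (by rw [h])
      · exact Or.inr (by rw [h])
  refine ⟨⟨e.symm, ?_⟩⟩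
  intro a b
  conv_rhs => rw [← e.apply_symm_apply a, ← e.apply_symm_apply b]
  exact (hadj (e.symm a) (e.symm b)).symm

lemma iso_2C4 {V : Type*} [Finite V] (G : SimpleGraph V) (hcard : Nat.card V = 8)
    (f : Fin 4 ⊕ Fin 4 → V) (hinj : Function.Injective f)
    (hNl : ∀ j : Fin 4, G.neighborSet (f (Sum.inl j)) =
      {f (Sum.inl (j - 1)), f (Sum.inl (j + 1))})
    (hNr : ∀ j : Fin 4, G.neighborSet (f (Sum.inr j)) =
      {f (Sum.inr (j - 1)), f (Sum.inr (j + 1))}) :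
    Nonempty (G ≃g (SimpleGraph.cycleGraph 4).disjUnion (SimpleGraph.cycleGraph 4)) := by
  have hbij : Function.Bijective f :=
    (Nat.bijective_iff_injective_and_card f).mpr ⟨hinj, by rw [hcard]; simp⟩
  let e := Equiv.ofBijective f hbij
  have hcyc : ∀ (g : Fin 4 → Fin 4 ⊕ Fin 4) (i j : Fin 4), Function.Injective g →
      (∀ k, G.neighborSet (f (g k)) = {f (g (k - 1)), f (g (k + 1))}) →
      (G.Adj (f (g i)) (f (g j)) ↔ (SimpleGraph.cycleGraph 4).Adj i j) := by
    intro g i j hg hN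
    have h1 : G.Adj (f (g i)) (f (g j)) ↔ f (g j) ∈ G.neighborSet (f (g i)) := Iff.rfl
    rw [h1, hN i]
    simp only [Set.mem_insert_iff, Set.mem_singleton_iff]
    have hc : (SimpleGraph.cycleGraph 4).Adj i j ↔ i - j = 1 ∨ j - i = 1 :=
      SimpleGraph.cycleGraph_adj (n := 2)
    rw [hc, fin_cycle_iff]
    constructor
    · rintro (h | h)
      · exact Or.inl (hg (hinj h))
      · exact Or.inr (hg (hinj h))
    · rintro (h | h)
      · exact Or.inl (by rw [h])
      · exact Or.inr (by rw [h])
  have hcross : ∀ i j : Fin 4, ¬ G.Adj (f (Sum.inl i)) (f (Sum.inr j)) := by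
    intro i j h
    have : f (Sum.inr j) ∈ G.neighborSet (f (Sum.inl i)) := h
    rw [hNl i] at this
    rcases this with h' | h'
    · exact absurd (hinj h') (by simp)
    · exact absurd (hinj h') (by simp)
  have hadj : ∀ s t : Fin 4 ⊕ Fin 4, G.Adj (f s) (f t) ↔
      ((SimpleGraph.cycleGraph 4).disjUnion (SimpleGraph.cycleGraph 4)).Adj s t := by
    rintro (i | i) (j | j)
    · exact hcyc Sum.inl i j (fun _ _ h => by injection h) hNl
    · exact iff_of_false (hcross i j) (by intro h; exact h)
    · exact iff_of_false (fun h => hcross j i h.symm) (by intro h; exact h)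
    · exact hcyc Sum.inr i j (fun _ _ h => by injection h) hNr
  refine ⟨⟨e.symm, ?_⟩⟩
  intro a b
  conv_rhs => rw [← e.apply_symm_apply a, ← e.apply_symm_apply b]
  exact (hadj (e.symm a) (e.symm b)).symm

end Isos
section Classify

lemma pair_of_mem_mem {α : Type*} {S : Set α} {x y : α} (hS : S.ncard = 2)
    (hx : x ∈ S) (hy : y ∈ S) (hxy : x ≠ y) : S = {x, y} := by
  obtain ⟨p, q, hpq, rfl⟩ := Set.ncard_eq_two.mp hS
  simp only [Set.mem_insert_iff, Set.mem_singleton_iff] at hx hy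
  rcases hx with rfl | rfl <;> rcases hy with rfl | rfl
  · exact absurd rfl hxy
  · rfl
  · exact Set.pair_comm _ _
  · exact absurd rfl hxy

lemma other_of_mem {α : Type*} {S : Set α} {x : α} (hS : S.ncard = 2) (hx : x ∈ S) :
    ∃ y, y ≠ x ∧ S = {x, y} := by
  obtain ⟨p, q, hpq, rfl⟩ := Set.ncard_eq_two.mp hS
  simp only [Set.mem_insert_iff, Set.mem_singleton_iff] at hx
  rcases hx with rfl | rfl
  · exact ⟨q, hpq.symm, rfl⟩
  · exact ⟨p, hpq, Set.pair_comm _ _⟩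

lemma exists_extra {α : Type*} {A T : Set α} (hA : A.ncard = 4) (hT : T.Finite)
    (hTc : T.ncard < 4) : ∃ a ∈ A, a ∉ T := by
  by_contra h
  push_neg at h
  have := Set.ncard_le_ncard h hT
  omega

lemma ncard_pair_le {α : Type*} (x y : α) : ({x, y} : Set α).ncard ≤ 2 := by
  have h1 := Set.ncard_insert_le x ({y} : Set α)
  simpa using h1

lemma ncard_triple_le {α : Type*} (x y z : α) : ({x, y, z} : Set α).ncard ≤ 3 := by
  have h1 := Set.ncard_insert_le x ({y, z} : Set α)
  have h2 := ncard_pair_le y z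
  omega

set_option maxHeartbeats 4000000 in
lemma classify {V : Type*} (G : SimpleGraph V) (LA LB : Set V)
    (hunion : LA ∪ LB = Set.univ) (hdisj : Disjoint LA LB)
    (hAfin : LA.Finite) (hBfin : LB.Finite)
    (hA : LA.ncard = 4) (hB : LB.ncard = 4)
    (hbip : ∀ v w, G.Adj v w → (v ∈ LA ↔ w ∈ LB))
    (hdeg : ∀ v, (G.neighborSet v).ncard = 2) :
    Nonempty (G ≃g SimpleGraph.cycleGraph 8) ∨
      Nonempty (G ≃g (SimpleGraph.cycleGraph 4).disjUnion (SimpleGraph.cycleGraph 4)) := by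
  classical
  have hVfin : Finite V := by
    rw [← Set.finite_univ_iff, ← hunion]
    exact hAfin.union hBfin
  have hcard : Nat.card V = 8 := by
    rw [← Set.ncard_univ, ← hunion, Set.ncard_union_eq hdisj hAfin hBfin, hA, hB]
  have hmemAB : ∀ v, v ∈ LA ∨ v ∈ LB := by
    intro v
    have : v ∈ LA ∪ LB := hunion ▸ Set.mem_univ v
    exact this
  have hABne : ∀ {a c : V}, a ∈ LA → c ∈ LB → a ≠ c := by
    rintro a c ha hc rfl
    exact Set.disjoint_left.mp hdisj ha hc
  have hnbA : ∀ v ∈ LA, G.neighborSet v ⊆ LB := by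
    intro v hv w hw
    exact (hbip v w hw).mp hv
  have hnbB : ∀ v ∈ LB, G.neighborSet v ⊆ LA := by
    intro v hv w hw
    have h1 := hbip v w hw
    have h2 : v ∉ LA := fun hva => Set.disjoint_left.mp hdisj hva hv
    rcases hmemAB w with h | h
    · exact h
    · exact absurd h (fun hwB => h2 (h1.mpr hwB))
  -- pick the starting vertex a1 and its two neighbours
  obtain ⟨a1, ha1⟩ := (Set.ncard_pos hAfin).mp (by omega) -- LA.Nonempty
  obtain ⟨b1, b2, hb12, hNa1⟩ := Set.ncard_eq_two.mp (hdeg a1)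
  have hb1B : b1 ∈ LB := hnbA a1 ha1 (by rw [hNa1]; exact Set.mem_insert _ _)
  have hb2B : b2 ∈ LB := hnbA a1 ha1 (by rw [hNa1]; exact Set.mem_insert_of_mem _ rfl)
  have ha1Nb1 : a1 ∈ G.neighborSet b1 := by
    have : b1 ∈ G.neighborSet a1 := by rw [hNa1]; exact Set.mem_insert _ _
    exact (SimpleGraph.mem_neighborSet _ _ _).mpr ((SimpleGraph.mem_neighborSet _ _ _).mp this).symm
  obtain ⟨a2, ha2ne, hNb1⟩ := other_of_mem (hdeg b1) ha1Nb1
  have ha2A : a2 ∈ LA := hnbB b1 hb1B (by rw [hNb1]; exact Set.mem_insert_of_mem _ rfl)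
  have hb1Na2 : b1 ∈ G.neighborSet a2 := by
    have : a2 ∈ G.neighborSet b1 := by rw [hNb1]; exact Set.mem_insert_of_mem _ rfl
    exact ((SimpleGraph.mem_neighborSet _ _ _).mp this).symm
  obtain ⟨β, hβne, hNa2⟩ := other_of_mem (hdeg a2) hb1Na2
  have hβB : β ∈ LB := hnbA a2 ha2A (by rw [hNa2]; exact Set.mem_insert_of_mem _ rfl)
  by_cases hcase : β = b2
  · -- two 4-cycles
    rw [hcase] at hNa2
    have hb2Na1 : b2 ∈ G.neighborSet a1 := by rw [hNa1]; exact Set.mem_insert_of_mem _ rfl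
    have ha1Nb2 : a1 ∈ G.neighborSet b2 := ((SimpleGraph.mem_neighborSet _ _ _).mp hb2Na1).symm
    have hb2Na2 : b2 ∈ G.neighborSet a2 := by rw [hNa2]; exact Set.mem_insert_of_mem _ rfl
    have ha2Nb2 : a2 ∈ G.neighborSet b2 := ((SimpleGraph.mem_neighborSet _ _ _).mp hb2Na2).symm
    have hNb2 : G.neighborSet b2 = {a1, a2} :=
      pair_of_mem_mem (hdeg b2) ha1Nb2 ha2Nb2 (fun h => ha2ne h.symm)
    -- the third element a3 of LA
    obtain ⟨a3, ha3A, ha3nm⟩ := exists_extra hA (Set.toFinite {a1, a2})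
      (by have := ncard_pair_le a1 a2; omega)
    simp only [Set.mem_insert_iff, Set.mem_singleton_iff, not_or] at ha3nm
    obtain ⟨ha3a1, ha3a2⟩ := ha3nm
    -- neighbours of a3 avoid b1, b2
    have hsub3 : G.neighborSet a3 ⊆ LB \ {b1, b2} := by
      intro w hw
      refine ⟨hnbA a3 ha3A hw, fun hmem => ?_⟩
      simp only [Set.mem_insert_iff, Set.mem_singleton_iff] at hmem
      rcases hmem with h | h <;> rw [h] at hw
      · have : a3 ∈ G.neighborSet b1 := ((SimpleGraph.mem_neighborSet _ _ _).mp hw).symm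
        rw [hNb1] at this
        rcases this with h2 | h2
        · exact ha3a1 h2
        · exact ha3a2 h2
      · have : a3 ∈ G.neighborSet b2 := ((SimpleGraph.mem_neighborSet _ _ _).mp hw).symm
        rw [hNb2] at this
        rcases this with h2 | h2
        · exact ha3a1 h2
        · exact ha3a2 h2
    have hdiff_fin : (LB \ {b1, b2}).Finite := hBfin.diff
    have hdiffcard : (LB \ {b1, b2}).ncard = 2 := by
      rw [Set.ncard_diff (t := LB) (by rintro w (rfl | rfl); exacts [hb1B, hb2B])
        (Set.toFinite _), Set.ncard_pair hb12, hB]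
    have hNa3 : G.neighborSet a3 = LB \ {b1, b2} :=
      Set.eq_of_subset_of_ncard_le hsub3 (by rw [hdiffcard, hdeg a3]) hdiff_fin
    obtain ⟨b3, b4, hb34, hdiffeq⟩ := Set.ncard_eq_two.mp hdiffcard
    have hNa3' : G.neighborSet a3 = {b3, b4} := hNa3.trans hdiffeq
    have hb3mem : b3 ∈ LB \ {b1, b2} := hdiffeq ▸ Set.mem_insert _ _
    have hb4mem : b4 ∈ LB \ {b1, b2} := hdiffeq ▸ Set.mem_insert_of_mem _ rfl
    obtain ⟨hb3B, hb3n⟩ := hb3mem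
    obtain ⟨hb4B, hb4n⟩ := hb4mem
    simp only [Set.mem_insert_iff, Set.mem_singleton_iff, not_or] at hb3n hb4n
    -- the fourth element a4 of LA
    obtain ⟨a4, ha4A, ha4nm⟩ := exists_extra hA (Set.toFinite {a1, a2, a3})
      (by have := ncard_triple_le a1 a2 a3; omega)
    simp only [Set.mem_insert_iff, Set.mem_singleton_iff, not_or] at ha4nm
    obtain ⟨ha4a1, ha4a2, ha4a3⟩ := ha4nm
    have hsub4 : G.neighborSet a4 ⊆ LB \ {b1, b2} := by
      intro w hw
      refine ⟨hnbA a4 ha4A hw, fun hmem => ?_⟩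
      simp only [Set.mem_insert_iff, Set.mem_singleton_iff] at hmem
      rcases hmem with h | h <;> rw [h] at hw
      · have : a4 ∈ G.neighborSet b1 := ((SimpleGraph.mem_neighborSet _ _ _).mp hw).symm
        rw [hNb1] at this
        rcases this with h2 | h2
        · exact ha4a1 h2
        · exact ha4a2 h2
      · have : a4 ∈ G.neighborSet b2 := ((SimpleGraph.mem_neighborSet _ _ _).mp hw).symm
        rw [hNb2] at this
        rcases this with h2 | h2
        · exact ha4a1 h2
        · exact ha4a2 h2
    have hNa4 : G.neighborSet a4 = {b3, b4} :=
      (Set.eq_of_subset_of_ncard_le hsub4 (by rw [hdiffcard, hdeg a4]) hdiff_fin).trans hdiffeq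
    -- neighbourhoods of b3, b4
    have ha3Nb3 : a3 ∈ G.neighborSet b3 := by
      have : b3 ∈ G.neighborSet a3 := by rw [hNa3']; exact Set.mem_insert _ _
      exact ((SimpleGraph.mem_neighborSet _ _ _).mp this).symm
    have ha4Nb3 : a4 ∈ G.neighborSet b3 := by
      have : b3 ∈ G.neighborSet a4 := by rw [hNa4]; exact Set.mem_insert _ _
      exact ((SimpleGraph.mem_neighborSet _ _ _).mp this).symm
    have ha3Nb4 : a3 ∈ G.neighborSet b4 := by
      have : b4 ∈ G.neighborSet a3 := by rw [hNa3']; exact Set.mem_insert_of_mem _ rfl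
      exact ((SimpleGraph.mem_neighborSet _ _ _).mp this).symm
    have ha4Nb4 : a4 ∈ G.neighborSet b4 := by
      have : b4 ∈ G.neighborSet a4 := by rw [hNa4]; exact Set.mem_insert_of_mem _ rfl
      exact ((SimpleGraph.mem_neighborSet _ _ _).mp this).symm
    have hNb3 : G.neighborSet b3 = {a3, a4} :=
      pair_of_mem_mem (hdeg b3) ha3Nb3 ha4Nb3 (fun h => ha4a3 h.symm)
    have hNb4 : G.neighborSet b4 = {a3, a4} :=
      pair_of_mem_mem (hdeg b4) ha3Nb4 ha4Nb4 (fun h => ha4a3 h.symm)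
    -- cross inequalities
    have ne11 : a1 ≠ b1 := hABne ha1 hb1B
    have ne12 : a1 ≠ b2 := hABne ha1 hb2B
    have ne13 : a1 ≠ b3 := hABne ha1 hb3B
    have ne14 : a1 ≠ b4 := hABne ha1 hb4B
    have ne21 : a2 ≠ b1 := hABne ha2A hb1B
    have ne22 : a2 ≠ b2 := hABne ha2A hb2B
    have ne23 : a2 ≠ b3 := hABne ha2A hb3B
    have ne24 : a2 ≠ b4 := hABne ha2A hb4B
    have ne31 : a3 ≠ b1 := hABne ha3A hb1B
    have ne32 : a3 ≠ b2 := hABne ha3A hb2B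
    have ne33 : a3 ≠ b3 := hABne ha3A hb3B
    have ne34 : a3 ≠ b4 := hABne ha3A hb4B
    have ne41 : a4 ≠ b1 := hABne ha4A hb1B
    have ne42 : a4 ≠ b2 := hABne ha4A hb2B
    have ne43 : a4 ≠ b3 := hABne ha4A hb3B
    have ne44 : a4 ≠ b4 := hABne ha4A hb4B
    obtain ⟨hb3b1, hb3b2⟩ := hb3n
    obtain ⟨hb4b1, hb4b2⟩ := hb4n
    refine Or.inr (iso_2C4 G hcard (Sum.elim ![a1, b1, a2, b2] ![a3, b3, a4, b4]) ?_ ?_ ?_)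
    · rintro (i | i) (j | j) h <;> fin_cases i <;> fin_cases j <;>
        first
          | rfl
          | (exfalso
             simp only [show ((⟨0, by norm_num⟩ : Fin 4)) = 0 by rfl,
        show ((⟨1, by norm_num⟩ : Fin 4)) = 1 by rfl,
        show ((⟨2, by norm_num⟩ : Fin 4)) = 2 by rfl,
        show ((⟨3, by norm_num⟩ : Fin 4)) = 3 by rfl,
        show ((0 : Fin 4) - 1) = 3 by decide,
        show ((0 : Fin 4) + 1) = 1 by decide,
        show ((1 : Fin 4) - 1) = 0 by decide,
        show ((1 : Fin 4) + 1) = 2 by decide,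
        show ((2 : Fin 4) - 1) = 1 by decide,
        show ((2 : Fin 4) + 1) = 3 by decide,
        show ((3 : Fin 4) - 1) = 2 by decide,
        show ((3 : Fin 4) + 1) = 0 by decide,
        Sum.elim_inl, Sum.elim_inr,
        show (![a1, b1, a2, b2] : Fin 4 → V) 0 = a1 by rfl,
        show (![a1, b1, a2, b2] : Fin 4 → V) 1 = b1 by rfl,
        show (![a1, b1, a2, b2] : Fin 4 → V) 2 = a2 by rfl,
        show (![a1, b1, a2, b2] : Fin 4 → V) 3 = b2 by rfl,
        show (![a3, b3, a4, b4] : Fin 4 → V) 0 = a3 by rfl,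
        show (![a3, b3, a4, b4] : Fin 4 → V) 1 = b3 by rfl,
        show (![a3, b3, a4, b4] : Fin 4 → V) 2 = a4 by rfl,
        show (![a3, b3, a4, b4] : Fin 4 → V) 3 = b4 by rfl] at h
             first
               | exact absurd h (by assumption)
               | exact absurd h.symm (by assumption))
    · intro j
      fin_cases j <;>
        simp only [show ((⟨0, by norm_num⟩ : Fin 4)) = 0 by rfl,
        show ((⟨1, by norm_num⟩ : Fin 4)) = 1 by rfl,
        show ((⟨2, by norm_num⟩ : Fin 4)) = 2 by rfl,
        show ((⟨3, by norm_num⟩ : Fin 4)) = 3 by rfl,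
        show ((0 : Fin 4) - 1) = 3 by decide,
        show ((0 : Fin 4) + 1) = 1 by decide,
        show ((1 : Fin 4) - 1) = 0 by decide,
        show ((1 : Fin 4) + 1) = 2 by decide,
        show ((2 : Fin 4) - 1) = 1 by decide,
        show ((2 : Fin 4) + 1) = 3 by decide,
        show ((3 : Fin 4) - 1) = 2 by decide,
        show ((3 : Fin 4) + 1) = 0 by decide,
        Sum.elim_inl, Sum.elim_inr,
        show (![a1, b1, a2, b2] : Fin 4 → V) 0 = a1 by rfl,
        show (![a1, b1, a2, b2] : Fin 4 → V) 1 = b1 by rfl,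
        show (![a1, b1, a2, b2] : Fin 4 → V) 2 = a2 by rfl,
        show (![a1, b1, a2, b2] : Fin 4 → V) 3 = b2 by rfl,
        show (![a3, b3, a4, b4] : Fin 4 → V) 0 = a3 by rfl,
        show (![a3, b3, a4, b4] : Fin 4 → V) 1 = b3 by rfl,
        show (![a3, b3, a4, b4] : Fin 4 → V) 2 = a4 by rfl,
        show (![a3, b3, a4, b4] : Fin 4 → V) 3 = b4 by rfl]
      · rw [hNa1]; exact Set.pair_comm b1 b2
      · exact hNb1
      · exact hNa2
      · rw [hNb2]; exact Set.pair_comm a1 a2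
    · intro j
      fin_cases j <;>
        simp only [show ((⟨0, by norm_num⟩ : Fin 4)) = 0 by rfl,
        show ((⟨1, by norm_num⟩ : Fin 4)) = 1 by rfl,
        show ((⟨2, by norm_num⟩ : Fin 4)) = 2 by rfl,
        show ((⟨3, by norm_num⟩ : Fin 4)) = 3 by rfl,
        show ((0 : Fin 4) - 1) = 3 by decide,
        show ((0 : Fin 4) + 1) = 1 by decide,
        show ((1 : Fin 4) - 1) = 0 by decide,
        show ((1 : Fin 4) + 1) = 2 by decide,
        show ((2 : Fin 4) - 1) = 1 by decide,
        show ((2 : Fin 4) + 1) = 3 by decide,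
        show ((3 : Fin 4) - 1) = 2 by decide,
        show ((3 : Fin 4) + 1) = 0 by decide,
        Sum.elim_inl, Sum.elim_inr,
        show (![a1, b1, a2, b2] : Fin 4 → V) 0 = a1 by rfl,
        show (![a1, b1, a2, b2] : Fin 4 → V) 1 = b1 by rfl,
        show (![a1, b1, a2, b2] : Fin 4 → V) 2 = a2 by rfl,
        show (![a1, b1, a2, b2] : Fin 4 → V) 3 = b2 by rfl,
        show (![a3, b3, a4, b4] : Fin 4 → V) 0 = a3 by rfl,
        show (![a3, b3, a4, b4] : Fin 4 → V) 1 = b3 by rfl,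
        show (![a3, b3, a4, b4] : Fin 4 → V) 2 = a4 by rfl,
        show (![a3, b3, a4, b4] : Fin 4 → V) 3 = b4 by rfl]
      · rw [hNa3']; exact Set.pair_comm b3 b4
      · exact hNb3
      · exact hNa4
      · rw [hNb4]; exact Set.pair_comm a3 a4
  · -- one 8-cycle (or contradiction)
    have nbsymm : ∀ {v w : V}, w ∈ G.neighborSet v → v ∈ G.neighborSet w :=
      fun h => ((SimpleGraph.mem_neighborSet _ _ _).mp h).symm
    have ha2Nβ : a2 ∈ G.neighborSet β :=
      nbsymm (by rw [hNa2]; exact Set.mem_insert_of_mem _ rfl)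
    obtain ⟨a3, ha3ne, hNβ⟩ := other_of_mem (hdeg β) ha2Nβ
    have ha3A : a3 ∈ LA := hnbB β hβB (by rw [hNβ]; exact Set.mem_insert_of_mem _ rfl)
    have ha3a1 : a3 ≠ a1 := by
      intro h
      have hβa3 : β ∈ G.neighborSet a3 :=
        nbsymm (by rw [hNβ]; exact Set.mem_insert_of_mem _ rfl)
      rw [h, hNa1] at hβa3
      rcases hβa3 with h' | h'
      · exact hβne h'
      · exact hcase h'
    have hβNa3 : β ∈ G.neighborSet a3 :=
      nbsymm (by rw [hNβ]; exact Set.mem_insert_of_mem _ rfl)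
    obtain ⟨γ, hγne, hNa3⟩ := other_of_mem (hdeg a3) hβNa3
    have hγB : γ ∈ LB := hnbA a3 ha3A (by rw [hNa3]; exact Set.mem_insert_of_mem _ rfl)
    have hγb1 : γ ≠ b1 := by
      intro h
      have : a3 ∈ G.neighborSet b1 := by
        have hx : γ ∈ G.neighborSet a3 := by rw [hNa3]; exact Set.mem_insert_of_mem _ rfl
        rw [h] at hx
        exact nbsymm hx
      rw [hNb1] at this
      rcases this with h' | h'
      · exact ha3a1 h'
      · exact ha3ne h'
    by_cases hγ2 : γ = b2
    · -- contradiction : the fourth element of LA has no room for its neighbours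
      exfalso
      have hb2Na1 : b2 ∈ G.neighborSet a1 := by rw [hNa1]; exact Set.mem_insert_of_mem _ rfl
      have ha1Nb2 : a1 ∈ G.neighborSet b2 := nbsymm hb2Na1
      have ha3Nb2 : a3 ∈ G.neighborSet b2 := by
        have hx : γ ∈ G.neighborSet a3 := by rw [hNa3]; exact Set.mem_insert_of_mem _ rfl
        rw [hγ2] at hx
        exact nbsymm hx
      have hNb2 : G.neighborSet b2 = {a1, a3} :=
        pair_of_mem_mem (hdeg b2) ha1Nb2 ha3Nb2 (Ne.symm ha3a1)
      obtain ⟨a4, ha4A, ha4nm⟩ := exists_extra hA (Set.toFinite {a1, a2, a3})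
        (by have := ncard_triple_le a1 a2 a3; omega)
      simp only [Set.mem_insert_iff, Set.mem_singleton_iff, not_or] at ha4nm
      obtain ⟨ha4a1, ha4a2, ha4a3⟩ := ha4nm
      have hsub : G.neighborSet a4 ⊆ LB \ {b1, b2, β} := by
        intro w hw
        refine ⟨hnbA a4 ha4A hw, fun hmem => ?_⟩
        simp only [Set.mem_insert_iff, Set.mem_singleton_iff] at hmem
        rcases hmem with h | h | h <;> rw [h] at hw
        · have := nbsymm hw
          rw [hNb1] at this
          rcases this with h' | h'
          · exact ha4a1 h'
          · exact ha4a2 h'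
        · have := nbsymm hw
          rw [hNb2] at this
          rcases this with h' | h'
          · exact ha4a1 h'
          · exact ha4a3 h'
        · have := nbsymm hw
          rw [hNβ] at this
          rcases this with h' | h'
          · exact ha4a2 h'
          · exact ha4a3 h'
      have htriple : ({b1, b2, β} : Set V).ncard = 3 := by
        rw [Set.ncard_insert_of_notMem (by simp [hb12, Ne.symm hβne]) (Set.toFinite _),
          Set.ncard_insert_of_notMem (by simp [Ne.symm hcase]) (Set.toFinite _),
          Set.ncard_singleton]
      have hcard3 : (LB \ {b1, b2, β}).ncard = 1 := by
        rw [Set.ncard_diff (t := LB) (by rintro w (rfl | rfl | rfl); exacts [hb1B, hb2B, hβB])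
          (Set.toFinite _), htriple, hB]
      have hle : (2 : ℕ) ≤ 1 := by
        rw [← hdeg a4, ← hcard3]
        exact Set.ncard_le_ncard hsub (hBfin.diff)
      omega
    · -- the 8-cycle
      have ha3Nγ : a3 ∈ G.neighborSet γ :=
        nbsymm (by rw [hNa3]; exact Set.mem_insert_of_mem _ rfl)
      obtain ⟨a4, ha4ne, hNγ⟩ := other_of_mem (hdeg γ) ha3Nγ
      have ha4A : a4 ∈ LA := hnbB γ hγB (by rw [hNγ]; exact Set.mem_insert_of_mem _ rfl)
      have ha4a1 : a4 ≠ a1 := by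
        intro h
        have hx : γ ∈ G.neighborSet a4 :=
          nbsymm (by rw [hNγ]; exact Set.mem_insert_of_mem _ rfl)
        rw [h, hNa1] at hx
        rcases hx with h' | h'
        · exact hγb1 h'
        · exact hγ2 h'
      have ha4a2 : a4 ≠ a2 := by
        intro h
        have hx : γ ∈ G.neighborSet a4 :=
          nbsymm (by rw [hNγ]; exact Set.mem_insert_of_mem _ rfl)
        rw [h, hNa2] at hx
        rcases hx with h' | h'
        · exact hγb1 h'
        · exact hγne h'
      have hγNa4 : γ ∈ G.neighborSet a4 :=
        nbsymm (by rw [hNγ]; exact Set.mem_insert_of_mem _ rfl)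
      obtain ⟨ε, hεne, hNa4⟩ := other_of_mem (hdeg a4) hγNa4
      have hεB : ε ∈ LB := hnbA a4 ha4A (by rw [hNa4]; exact Set.mem_insert_of_mem _ rfl)
      have hεb1 : ε ≠ b1 := by
        intro h
        have hx : ε ∈ G.neighborSet a4 := by rw [hNa4]; exact Set.mem_insert_of_mem _ rfl
        rw [h] at hx
        have := nbsymm hx
        rw [hNb1] at this
        rcases this with h' | h'
        · exact ha4a1 h'
        · exact ha4a2 h'
      have hεβ : ε ≠ β := by
        intro h
        have hx : ε ∈ G.neighborSet a4 := by rw [hNa4]; exact Set.mem_insert_of_mem _ rfl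
        rw [h] at hx
        have := nbsymm hx
        rw [hNβ] at this
        rcases this with h' | h'
        · exact ha4a2 h'
        · exact ha4ne h'
      have hquad : ({b1, b2, β, γ} : Set V).ncard = 4 := by
        rw [Set.ncard_insert_of_notMem
            (by simp [hb12, Ne.symm hβne, Ne.symm hγb1]) (Set.toFinite _),
          Set.ncard_insert_of_notMem (by simp [Ne.symm hcase, Ne.symm hγ2]) (Set.toFinite _),
          Set.ncard_pair (fun h => hγne h.symm)]
      have hLB : LB = {b1, b2, β, γ} :=
        (Set.eq_of_subset_of_ncard_le
          (by rintro w (rfl | rfl | rfl | rfl); exacts [hb1B, hb2B, hβB, hγB])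
          (by rw [hquad, hB]) hBfin).symm
      have hε2 : ε = b2 := by
        have hx : ε ∈ LB := hεB
        rw [hLB] at hx
        rcases hx with h | h | h | h
        · exact absurd h hεb1
        · exact h
        · exact absurd h hεβ
        · exact absurd h hεne
      rw [hε2] at hNa4
      have hb2Na1 : b2 ∈ G.neighborSet a1 := by rw [hNa1]; exact Set.mem_insert_of_mem _ rfl
      have ha1Nb2 : a1 ∈ G.neighborSet b2 := nbsymm hb2Na1
      have ha4Nb2 : a4 ∈ G.neighborSet b2 :=
        nbsymm (by rw [hNa4]; exact Set.mem_insert_of_mem _ rfl)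
      have hNb2 : G.neighborSet b2 = {a1, a4} :=
        pair_of_mem_mem (hdeg b2) ha1Nb2 ha4Nb2 (Ne.symm ha4a1)
      have ha4a3 : a4 ≠ a3 := ha4ne
      -- cross inequalities
      have ne11 : a1 ≠ b1 := hABne ha1 hb1B
      have ne12 : a1 ≠ b2 := hABne ha1 hb2B
      have ne13 : a1 ≠ β := hABne ha1 hβB
      have ne14 : a1 ≠ γ := hABne ha1 hγB
      have ne21 : a2 ≠ b1 := hABne ha2A hb1B
      have ne22 : a2 ≠ b2 := hABne ha2A hb2B
      have ne23 : a2 ≠ β := hABne ha2A hβB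
      have ne24 : a2 ≠ γ := hABne ha2A hγB
      have ne31 : a3 ≠ b1 := hABne ha3A hb1B
      have ne32 : a3 ≠ b2 := hABne ha3A hb2B
      have ne33 : a3 ≠ β := hABne ha3A hβB
      have ne34 : a3 ≠ γ := hABne ha3A hγB
      have ne41 : a4 ≠ b1 := hABne ha4A hb1B
      have ne42 : a4 ≠ b2 := hABne ha4A hb2B
      have ne43 : a4 ≠ β := hABne ha4A hβB
      have ne44 : a4 ≠ γ := hABne ha4A hγB
      refine Or.inl (iso_C8 G hcard ![a1, b1, a2, β, a3, γ, a4, b2] ?_ ?_)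
      · intro i j h
        fin_cases i <;> fin_cases j <;>
          first
            | rfl
            | (exfalso
               simp only [show ((⟨0, by norm_num⟩ : Fin 8)) = 0 by rfl,
        show ((⟨1, by norm_num⟩ : Fin 8)) = 1 by rfl,
        show ((⟨2, by norm_num⟩ : Fin 8)) = 2 by rfl,
        show ((⟨3, by norm_num⟩ : Fin 8)) = 3 by rfl,
        show ((⟨4, by norm_num⟩ : Fin 8)) = 4 by rfl,
        show ((⟨5, by norm_num⟩ : Fin 8)) = 5 by rfl,
        show ((⟨6, by norm_num⟩ : Fin 8)) = 6 by rfl,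
        show ((⟨7, by norm_num⟩ : Fin 8)) = 7 by rfl,
        show ((0 : Fin 8) - 1) = 7 by decide,
        show ((0 : Fin 8) + 1) = 1 by decide,
        show ((1 : Fin 8) - 1) = 0 by decide,
        show ((1 : Fin 8) + 1) = 2 by decide,
        show ((2 : Fin 8) - 1) = 1 by decide,
        show ((2 : Fin 8) + 1) = 3 by decide,
        show ((3 : Fin 8) - 1) = 2 by decide,
        show ((3 : Fin 8) + 1) = 4 by decide,
        show ((4 : Fin 8) - 1) = 3 by decide,
        show ((4 : Fin 8) + 1) = 5 by decide,
        show ((5 : Fin 8) - 1) = 4 by decide,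
        show ((5 : Fin 8) + 1) = 6 by decide,
        show ((6 : Fin 8) - 1) = 5 by decide,
        show ((6 : Fin 8) + 1) = 7 by decide,
        show ((7 : Fin 8) - 1) = 6 by decide,
        show ((7 : Fin 8) + 1) = 0 by decide,
        show (![a1, b1, a2, β, a3, γ, a4, b2] : Fin 8 → V) 0 = a1 by rfl,
        show (![a1, b1, a2, β, a3, γ, a4, b2] : Fin 8 → V) 1 = b1 by rfl,
        show (![a1, b1, a2, β, a3, γ, a4, b2] : Fin 8 → V) 2 = a2 by rfl,
        show (![a1, b1, a2, β, a3, γ, a4, b2] : Fin 8 → V) 3 = β by rfl,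
        show (![a1, b1, a2, β, a3, γ, a4, b2] : Fin 8 → V) 4 = a3 by rfl,
        show (![a1, b1, a2, β, a3, γ, a4, b2] : Fin 8 → V) 5 = γ by rfl,
        show (![a1, b1, a2, β, a3, γ, a4, b2] : Fin 8 → V) 6 = a4 by rfl,
        show (![a1, b1, a2, β, a3, γ, a4, b2] : Fin 8 → V) 7 = b2 by rfl] at h
               first
                 | exact absurd h (by assumption)
                 | exact absurd h.symm (by assumption))
      · intro j
        fin_cases j <;>
          simp only [show ((⟨0, by norm_num⟩ : Fin 8)) = 0 by rfl,
        show ((⟨1, by norm_num⟩ : Fin 8)) = 1 by rfl,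
        show ((⟨2, by norm_num⟩ : Fin 8)) = 2 by rfl,
        show ((⟨3, by norm_num⟩ : Fin 8)) = 3 by rfl,
        show ((⟨4, by norm_num⟩ : Fin 8)) = 4 by rfl,
        show ((⟨5, by norm_num⟩ : Fin 8)) = 5 by rfl,
        show ((⟨6, by norm_num⟩ : Fin 8)) = 6 by rfl,
        show ((⟨7, by norm_num⟩ : Fin 8)) = 7 by rfl,
        show ((0 : Fin 8) - 1) = 7 by decide,
        show ((0 : Fin 8) + 1) = 1 by decide,
        show ((1 : Fin 8) - 1) = 0 by decide,
        show ((1 : Fin 8) + 1) = 2 by decide,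
        show ((2 : Fin 8) - 1) = 1 by decide,
        show ((2 : Fin 8) + 1) = 3 by decide,
        show ((3 : Fin 8) - 1) = 2 by decide,
        show ((3 : Fin 8) + 1) = 4 by decide,
        show ((4 : Fin 8) - 1) = 3 by decide,
        show ((4 : Fin 8) + 1) = 5 by decide,
        show ((5 : Fin 8) - 1) = 4 by decide,
        show ((5 : Fin 8) + 1) = 6 by decide,
        show ((6 : Fin 8) - 1) = 5 by decide,
        show ((6 : Fin 8) + 1) = 7 by decide,
        show ((7 : Fin 8) - 1) = 6 by decide,
        show ((7 : Fin 8) + 1) = 0 by decide,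
        show (![a1, b1, a2, β, a3, γ, a4, b2] : Fin 8 → V) 0 = a1 by rfl,
        show (![a1, b1, a2, β, a3, γ, a4, b2] : Fin 8 → V) 1 = b1 by rfl,
        show (![a1, b1, a2, β, a3, γ, a4, b2] : Fin 8 → V) 2 = a2 by rfl,
        show (![a1, b1, a2, β, a3, γ, a4, b2] : Fin 8 → V) 3 = β by rfl,
        show (![a1, b1, a2, β, a3, γ, a4, b2] : Fin 8 → V) 4 = a3 by rfl,
        show (![a1, b1, a2, β, a3, γ, a4, b2] : Fin 8 → V) 5 = γ by rfl,
        show (![a1, b1, a2, β, a3, γ, a4, b2] : Fin 8 → V) 6 = a4 by rfl,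
        show (![a1, b1, a2, β, a3, γ, a4, b2] : Fin 8 → V) 7 = b2 by rfl]
        · rw [hNa1]; exact Set.pair_comm b1 b2
        · exact hNb1
        · exact hNa2
        · exact hNβ
        · exact hNa3
        · exact hNγ
        · exact hNa4
        · rw [hNb2]; exact Set.pair_comm a1 a4

end Classify
/-- in a strongly confluent infinite downward bounded binomial poset with
atomic sequence `(1,1,2,2,2,...)`, each section `X_{i+1,i+2}` (`i ≥ 1`) is a bipartite
2-regular graph on 8 vertices, hence isomorphic to `C₈` or to `C₄ ∪ C₄`. -/
theorem section_of_A112_is_C8_or_C4C4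
    (P : Type*) [PartialOrder P] [Infinite P] (b : P)
    (hP : IsBinomialPoset P b A112) (hconf : StronglyConfluent P)
    (i : ℕ) (hi : 1 ≤ i) :
    Nat.card (SectionVerts b i) = 8 ∧
    (∀ v : SectionVerts b i, (v : P) ∈ levelSet b (i + 1) ∨ (v : P) ∈ levelSet b (i + 2)) ∧
    (∀ v w : SectionVerts b i, (sectionGraph b i).Adj v w →
      ((v : P) ∈ levelSet b (i + 1) ↔ ¬ (w : P) ∈ levelSet b (i + 1))) ∧
    (∀ v : SectionVerts b i, ((sectionGraph b i).neighborSet v).ncard = 2) ∧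
    (Nonempty (sectionGraph b i ≃g SimpleGraph.cycleGraph 8) ∨
      Nonempty (sectionGraph b i ≃g
        (SimpleGraph.cycleGraph 4).disjUnion (SimpleGraph.cycleGraph 4))) := by
  have hfin1 : (levelSet b (i + 1)).Finite := level_finite hP hconf (i + 1)
  have hfin2 : (levelSet b (i + 2)).Finite := level_finite hP hconf (i + 2)
  have hc1 : (levelSet b (i + 1)).ncard = 4 := level_card hP hconf (i + 1) (by omega)
  have hc2 : (levelSet b (i + 2)).ncard = 4 := level_card hP hconf (i + 2) (by omega)
  have hdisjlev : Disjoint (levelSet b (i + 1)) (levelSet b (i + 2)) :=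
    levelSet_disjoint hP (by omega)
  have hSeq : SectionVerts b i = levelSet b (i + 1) ∪ levelSet b (i + 2) := rfl
  have hSfin : (SectionVerts b i).Finite := by rw [hSeq]; exact hfin1.union hfin2
  have hVfin : Finite (SectionVerts b i) := hSfin.to_subtype
  -- cardinality
  have hcard8 : Nat.card (SectionVerts b i) = 8 := by
    rw [Nat.card_coe_set_eq, hSeq, Set.ncard_union_eq hdisjlev hfin1 hfin2, hc1, hc2]
  -- covers within the section go from level i+1 to level i+2
  have hcovlevel : ∀ {v w : P}, v ∈ SectionVerts b i → w ∈ SectionVerts b i → v ⋖ w →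
      v ∈ levelSet b (i + 1) ∧ w ∈ levelSet b (i + 2) := by
    intro v w hv hw hvw
    rcases hv with hv1 | hv2
    · exact ⟨hv1, rank_covby hP hvw hv1⟩
    · exfalso
      have hw3 : HasRankFrom b w (i + 2 + 1) := rank_covby hP hvw hv2
      rcases hw with hw1 | hw2
      · have := rank_unique hP hw1 hw3; omega
      · have := rank_unique hP hw2 hw3; omega
  have hnotboth : ∀ {v : P}, v ∈ levelSet b (i + 1) → v ∈ levelSet b (i + 2) → False := by
    intro v h1 h2
    have := rank_unique hP h1 h2; omega
  -- bipartiteness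
  have hbip : ∀ v w : SectionVerts b i, (sectionGraph b i).Adj v w →
      ((v : P) ∈ levelSet b (i + 1) ↔ ¬ (w : P) ∈ levelSet b (i + 1)) := by
    intro v w hadj
    have hadj' : (v : P) ⋖ (w : P) ∨ (w : P) ⋖ (v : P) := hadj
    rcases hadj' with h | h
    · obtain ⟨hv1, hw2⟩ := hcovlevel v.2 w.2 h
      exact iff_of_true hv1 (fun hw1 => hnotboth hw1 hw2)
    · obtain ⟨hw1, hv2⟩ := hcovlevel w.2 v.2 h
      exact iff_of_false (fun hv1 => hnotboth hv1 hv2) (fun h' => h' hw1)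
  -- neighbourhoods, described in `P`
  have himg : ∀ v : SectionVerts b i,
      ((v : P) ∈ levelSet b (i + 1) →
        Subtype.val '' ((sectionGraph b i).neighborSet v) = {z : P | (v : P) ⋖ z}) ∧
      ((v : P) ∈ levelSet b (i + 2) →
        Subtype.val '' ((sectionGraph b i).neighborSet v) = {u : P | u ⋖ (v : P)}) := by
    intro v
    constructor
    · intro hv1
      ext z
      simp only [Set.mem_image, Set.mem_setOf_eq]
      constructor
      · rintro ⟨w, hw, rfl⟩
        have hadj' : (v : P) ⋖ (w : P) ∨ (w : P) ⋖ (v : P) := hw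
        rcases hadj' with h | h
        · exact h
        · obtain ⟨-, hv2⟩ := hcovlevel w.2 v.2 h
          exact absurd hv2 (fun h2 => hnotboth hv1 h2)
      · intro hz
        have hz2 : z ∈ levelSet b (i + 2) := rank_covby hP hz hv1
        refine ⟨⟨z, Or.inr hz2⟩, ?_, rfl⟩
        exact Or.inl hz
    · intro hv2
      ext u
      simp only [Set.mem_image, Set.mem_setOf_eq]
      constructor
      · rintro ⟨w, hw, rfl⟩
        have hadj' : (v : P) ⋖ (w : P) ∨ (w : P) ⋖ (v : P) := hw
        rcases hadj' with h | h
        · obtain ⟨hv1, -⟩ := hcovlevel v.2 w.2 h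
          exact absurd hv1 (fun h1 => hnotboth h1 hv2)
        · exact h
      · intro hu
        have hu1 : u ∈ levelSet b (i + 1) := cover_mem_level' hP hv2 hu
        refine ⟨⟨u, Or.inl hu1⟩, ?_, rfl⟩
        exact Or.inr hu
  -- degrees
  have hdeg : ∀ v : SectionVerts b i, ((sectionGraph b i).neighborSet v).ncard = 2 := by
    intro v
    have hinj := Set.ncard_image_of_injective ((sectionGraph b i).neighborSet v)
      (Subtype.val_injective (p := fun x => x ∈ SectionVerts b i))
    rcases v.2 with hv1 | hv2
    · rw [← hinj, (himg v).1 hv1]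
      exact (updeg hP hconf (v : P)).2
    · rw [← hinj, (himg v).2 hv2]
      have : HasRankFrom b (v : P) (i + 1 + 1) := hv2
      rw [downdeg hP this]
      exact A112_ge (i + 1 + 1) (by omega)
  refine ⟨hcard8, fun v => v.2, hbip, hdeg, ?_⟩
  -- classification
  refine classify (sectionGraph b i)
    (Subtype.val ⁻¹' levelSet b (i + 1)) (Subtype.val ⁻¹' levelSet b (i + 2))
    ?_ ?_ (Set.toFinite _) (Set.toFinite _) ?_ ?_ ?_ hdeg
  · ext v
    simp only [Set.mem_union, Set.mem_preimage, Set.mem_univ, iff_true]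
    exact v.2
  · rw [Set.disjoint_left]
    intro v h1 h2
    exact hnotboth h1 h2
  · -- LA.ncard = 4
    have himgA : Subtype.val '' (Subtype.val ⁻¹' levelSet b (i + 1)
        : Set (SectionVerts b i)) = levelSet b (i + 1) := by
      ext z
      simp only [Set.mem_image, Set.mem_preimage]
      constructor
      · rintro ⟨w, hw, rfl⟩; exact hw
      · intro hz; exact ⟨⟨z, Or.inl hz⟩, hz, rfl⟩
    rw [← Set.ncard_image_of_injective _
      (Subtype.val_injective (p := fun x => x ∈ SectionVerts b i)), himgA, hc1]
  · have himgB : Subtype.val '' (Subtype.val ⁻¹' levelSet b (i + 2)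
        : Set (SectionVerts b i)) = levelSet b (i + 2) := by
      ext z
      simp only [Set.mem_image, Set.mem_preimage]
      constructor
      · rintro ⟨w, hw, rfl⟩; exact hw
      · intro hz; exact ⟨⟨z, Or.inr hz⟩, hz, rfl⟩
    rw [← Set.ncard_image_of_injective _
      (Subtype.val_injective (p := fun x => x ∈ SectionVerts b i)), himgB, hc2]
  · intro v w hadj
    have h1 := hbip v w hadj
    simp only [Set.mem_preimage]
    rw [h1]
    constructor
    · intro hw1
      rcases w.2 with h | h
      · exact absurd h hw1
      · exact h
    · intro hw2 hw1
      exact hnotboth hw1 hw2
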